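/- arXiv:1103.0959 — 2 statements merged into one kernel-verified Lean document; each statement's English description precedes it below -/
import Mathlib

section
/- A finite EI category C satisfies the Unique Factorization Property if and only if every full subcategory of C satisfies the Unique Factorization Property. -/
open CategoryTheory

/-- A morphism is unfactorizable if it is not an isomorphism and in any factorization into
two morphisms one factor is an isomorphism. -/
def Unfactorizable {C : Type*} [Category C] {x z : C} (α : x ⟶ z) : Prop :=
  ¬ IsIso α ∧ ∀ (y : C) (β : x ⟶ y) (γ : y ⟶ z), α = β ≫ γ → IsIso β ∨ IsIso γ

/-- A path in a category all of whose edges are unfactorizable morphisms. -/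
inductive PathUnfact {C : Type*} [Category C] : ∀ {x y : C}, Quiver.Path x y → Prop
  | nil {x : C} : PathUnfact (Quiver.Path.nil : Quiver.Path x x)
  | cons {x y z : C} {p : Quiver.Path x y} {e : y ⟶ z} :
      PathUnfact p → Unfactorizable e → PathUnfact (p.cons e)

/-- `TwistedBy p q g'` says that the paths `p = (α₁, …, αₙ)` and `q = (β₁, …, βₙ)` pass
through the same objects and there are automorphisms `hᵢ` of the intermediate objects with
`β₁ = h₁ ∘ α₁`, `βᵢ = hᵢ ∘ αᵢ ∘ hᵢ₋₁⁻¹`, and `βₙ = g' ∘ αₙ ∘ hₙ₋₁⁻¹`, where `g'` is the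
final twist at the common target. -/
inductive TwistedBy {C : Type*} [Category C] :
    ∀ {x y : C}, Quiver.Path x y → Quiver.Path x y → (y ≅ y) → Prop
  | nil {x : C} :
      TwistedBy (Quiver.Path.nil : Quiver.Path x x) Quiver.Path.nil (Iso.refl x)
  | cons {x w y : C} {p q : Quiver.Path x w} (g : w ≅ w) (g' : y ≅ y) (e : w ⟶ y) :
      TwistedBy p q g → TwistedBy (p.cons e) (q.cons (g.inv ≫ e ≫ g'.hom)) g'

/-- The Unique Factorization Property: any two decompositions of a non-isomorphism into
unfactorizable morphisms have the same length, pass through the same intermediate objects,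
and differ only by automorphisms of the intermediate objects. -/
def SatisfiesUFP (C : Type*) [Category C] : Prop :=
  ∀ {x y : C} (p q : Quiver.Path x y), PathUnfact p → PathUnfact q →
    ¬ IsIso (composePath p) → composePath p = composePath q → TwistedBy p q (Iso.refl y)


/-!
Refine every edge of a path of morphisms unfactorizable in a full subcategory into a nonempty
path of morphisms unfactorizable in the ambient category; this is possible in a finite EI
category because a non-isomorphism `x ⟶ y` strictly increases the number of objects mapping
in. UFP in the ambient category matches the refinements of two such paths up to automorphisms.
Comparing the refinements of the last edges from the right: if one were strictly shorter, the
edge with the longer refinement would factor through an object of the subcategory into two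
non-isomorphisms; so they have equal length, the last edges agree up to automorphisms, and one
recurses. The converse is the case of the full subcategory on all objects.
-/

open Quiver

def IsEI (C : Type*) [Category C] : Prop := ∀ (x : C) (f : x ⟶ x), IsIso f

section EI
variable {C : Type*} [Category C]

theorem IsEI.isIso_of_hom (hEI : IsEI C) {x y : C} (f : x ⟶ y) (g : y ⟶ x) : IsIso f := by
  have := hEI x (f ≫ g)
  have := hEI y (g ≫ f)
  have : IsSplitMono f :=
    .mk' ⟨g ≫ inv (f ≫ g), by rw [← Category.assoc, IsIso.hom_inv_id]⟩
  have : IsSplitEpi f := .mk' ⟨inv (g ≫ f) ≫ g, by rw [Category.assoc, IsIso.inv_hom_id]⟩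
  exact isIso_of_mono_of_isSplitEpi f

theorem IsEI.isIso_right_of_isIso_comp (hEI : IsEI C) {x y z : C} {f : x ⟶ y} {g : y ⟶ z}
    (h : IsIso (f ≫ g)) : IsIso g :=
  hEI.isIso_of_hom g (inv (f ≫ g) ≫ f)

theorem IsEI.of_fullyFaithful {D : Type*} [Category D] (hEI : IsEI C) (F : D ⥤ C) [F.Full]
    [F.Faithful] : IsEI D := fun _ f =>
  (isIso_iff_of_reflects_iso f F).1 (hEI _ _)

end EI

section Paths
variable {C : Type*} [Category C]

theorem PathUnfact.comp {x y z : C} {p : Path x y} :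
    ∀ {q : Path y z}, PathUnfact p → PathUnfact q → PathUnfact (p.comp q)
  | .nil, hp, _ => hp
  | .cons _ _, hp, .cons hq he => .cons (hp.comp hq) he

theorem PathUnfact.of_comp {x y z : C} {p : Path x y} :
    ∀ {q : Path y z}, PathUnfact (p.comp q) → PathUnfact p ∧ PathUnfact q
  | .nil, h => ⟨h, .nil⟩
  | .cons _ _, h => by
    rw [Path.comp_cons] at h
    obtain _ | ⟨h, he⟩ := h
    exact ⟨(of_comp h).1, .cons (of_comp h).2 he⟩

theorem PathUnfact.not_isIso_composePath (hEI : IsEI C) {x y : C} {p : Path x y}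
    (hp : PathUnfact p) (hlen : 0 < p.length) : ¬ IsIso (composePath p) := by
  cases hp with
  | nil => simp at hlen
  | cons _ he =>
    rw [composePath_cons]
    exact fun h => he.1 (hEI.isIso_right_of_isIso_comp h)

theorem IsEI.ncard_sources_lt [Finite C] (hEI : IsEI C) {x y : C} (f : x ⟶ y)
    (hf : ¬ IsIso f) :
    {z : C | Nonempty (z ⟶ x)}.ncard < {z : C | Nonempty (z ⟶ y)}.ncard := by
  refine Set.ncard_lt_ncard ⟨fun z ⟨g⟩ => ⟨g ≫ f⟩, fun hsub => ?_⟩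
  obtain ⟨g⟩ : Nonempty (y ⟶ x) := hsub ⟨𝟙 y⟩
  exact hf (hEI.isIso_of_hom f g)

theorem IsEI.exists_pathUnfact_composePath_eq [Finite C] (hEI : IsEI C) {x y : C}
    (f : x ⟶ y) (hf : ¬ IsIso f) :
    ∃ p : Path x y, PathUnfact p ∧ 0 < p.length ∧ composePath p = f := by
  by_cases hu : Unfactorizable f
  · exact ⟨Path.nil.cons f, .cons .nil hu, Nat.one_pos, by simp⟩
  · obtain ⟨w, β, γ, rfl, hβ, hγ⟩ : ∃ (w : C) (β : x ⟶ w) (γ : w ⟶ y),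
        f = β ≫ γ ∧ ¬ IsIso β ∧ ¬ IsIso γ := by
      simpa [Unfactorizable, hf] using hu
    -- these two bounds make the recursion terminate
    have := hEI.ncard_sources_lt β hβ
    have := hEI.ncard_sources_lt γ hγ
    obtain ⟨p, hp, hlen, rfl⟩ := hEI.exists_pathUnfact_composePath_eq β hβ
    obtain ⟨q, hq, -, rfl⟩ := hEI.exists_pathUnfact_composePath_eq γ hγ
    exact ⟨p.comp q, hp.comp hq, by rw [Path.length_comp]; omega, composePath_comp p q⟩
termination_by {z : C | Nonempty (z ⟶ y)}.ncard - {z : C | Nonempty (z ⟶ x)}.ncard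

end Paths

theorem Quiver.Path.exists_eq_comp_of_comp_eq_comp {V : Type*} [Quiver V] :
    ∀ {b' c : V} (t : Path b' c) {a b : V} {B : Path a b} {s : Path b c} {Q : Path a b'},
      B.comp s = Q.comp t → t.length ≤ s.length →
      ∃ u : Path b b', s = u.comp t ∧ Q = B.comp u
  | _, _, .nil, _, _, _, s, _, h, _ => ⟨s, rfl, h.symm⟩
  | _, _, .cons t e, _, _, B, s, Q, h, hlen => by
    cases s with
    | nil => simp at hlen
    | cons s e' =>
      rw [Path.comp_cons, Path.comp_cons] at h
      obtain rfl := Path.obj_eq_of_cons_eq_cons h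
      obtain rfl := eq_of_heq (Path.hom_heq_of_cons_eq_cons h)
      obtain ⟨u, rfl, rfl⟩ := exists_eq_comp_of_comp_eq_comp t
        (eq_of_heq (Path.heq_of_cons_eq_cons h)) (by simpa using hlen)
      exact ⟨u, rfl, rfl⟩

section Twisted
variable {C : Type*} [Category C]

theorem TwistedBy.exists_split {x w : C} (A : Path x w) :
    ∀ {y : C} (r : Path w y) {Q : Path x y} {g : y ≅ y}, TwistedBy (A.comp r) Q g →
      ∃ (B : Path x w) (s : Path w y) (gw : w ≅ w), Q = B.comp s ∧ TwistedBy A B gw ∧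
        s.length = r.length ∧ composePath s = gw.inv ≫ composePath r ≫ g.hom
  | _, .nil, Q, g, h => ⟨Q, .nil, g, rfl, h, rfl, by simp⟩
  | _, .cons r e, _, g, h => by
    rw [Path.comp_cons] at h
    obtain _ | ⟨gv, _, _, h⟩ := h
    obtain ⟨B, s, gw, rfl, hAB, hlen, hs⟩ := exists_split A r h
    exact ⟨B, s.cons (gv.inv ≫ e ≫ g.hom), gw, rfl, hAB, by simp [hlen], by simp [hs]⟩

end Twisted

section Refinement
variable {C D : Type*} [Category C] [Category D] (F : D ⥤ C)

inductive Refines : ∀ {X Y : D}, Path X Y → Path (F.obj X) (F.obj Y) → Prop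
  | nil {X : D} : Refines (Path.nil : Path X X) Path.nil
  | cons {X Y Z : D} {p : Path X Y} {P : Path (F.obj X) (F.obj Y)} {e : Y ⟶ Z}
      {r : Path (F.obj Y) (F.obj Z)} :
      Refines p P → PathUnfact r → 0 < r.length → composePath r = F.map e →
      Refines (p.cons e) (P.comp r)

variable {F}

theorem Refines.length_eq_zero_iff {X Y : D} {p : Path X Y} {P : Path (F.obj X) (F.obj Y)}
    (h : Refines F p P) : p.length = 0 ↔ P.length = 0 := by
  induction h with
  | nil => simp
  | cons _ _ hlen _ _ => simp only [Path.length_cons, Path.length_comp]; omega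

theorem Refines.pathUnfact {X Y : D} {p : Path X Y} {P : Path (F.obj X) (F.obj Y)}
    (h : Refines F p P) : PathUnfact P := by
  induction h with
  | nil => exact .nil
  | cons _ hr _ _ ih => exact ih.comp hr

theorem Refines.composePath_eq {X Y : D} {p : Path X Y} {P : Path (F.obj X) (F.obj Y)}
    (h : Refines F p P) : composePath P = F.map (composePath p) := by
  induction h with
  | nil => simp
  | cons _ _ _ hr ih => simp [composePath_comp, ih, hr]

theorem PathUnfact.exists_refines [Finite C] (hEI : IsEI C) [F.Full] [F.Faithful] {X Y : D}
    {p : Path X Y} (hp : PathUnfact p) : ∃ P, Refines F p P := by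
  induction hp with
  | nil => exact ⟨.nil, .nil⟩
  | @cons _ _ _ e _ he ih =>
    obtain ⟨P, hP⟩ := ih
    obtain ⟨r, hr, hlen, hre⟩ := hEI.exists_pathUnfact_composePath_eq (F.map e)
      (by simpa [isIso_iff_of_reflects_iso] using he.1)
    exact ⟨P.comp r, hP.cons hr hlen hre⟩

theorem Unfactorizable.isIso_or_isIso_of_map_eq_comp [F.Full] [F.Faithful] {W Y V : D}
    {e : W ⟶ Y} (he : Unfactorizable e) {a : F.obj W ⟶ F.obj V} {b : F.obj V ⟶ F.obj Y}
    (h : F.map e = a ≫ b) : IsIso a ∨ IsIso b := by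
  have hfac : e = F.preimage a ≫ F.preimage b := F.map_injective (by simp [h])
  rcases he.2 V _ _ hfac with h | h
  · exact .inl (by simpa using F.map_isIso (F.preimage a))
  · exact .inr (by simpa using F.map_isIso (F.preimage b))

theorem Unfactorizable.comp_map_comp_ne [F.Full] [F.Faithful] {W W' Y : D} {a : W ⟶ Y}
    {b : W' ⟶ Y} (ha : Unfactorizable a) (hb : Unfactorizable b) {c : F.obj W ⟶ F.obj W'}
    (hc : ¬ IsIso c) {i : F.obj W ⟶ F.obj W} {j k : F.obj Y ⟶ F.obj Y} [IsIso i] [IsIso j]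
    [IsIso k] : c ≫ F.map b ≫ k ≠ i ≫ F.map a ≫ j := by
  intro h
  have hfac : F.map a = (inv i ≫ c) ≫ (F.map b ≫ k ≫ inv j) := by
    simp only [Category.assoc]
    rw [reassoc_of% h]
    simp
  rcases ha.isIso_or_isIso_of_map_eq_comp hfac with h | h
  · exact hc (by simpa using h)
  · exact hb.1 ((isIso_iff_of_reflects_iso b F).1 (by simpa using h))

@[simp]
theorem Functor.preimageIso_refl [F.Full] [F.Faithful] (X : D) :
    F.preimageIso (Iso.refl (F.obj X)) = Iso.refl X := by
  ext
  simp

theorem TwistedBy.of_refines [F.Full] [F.Faithful] (hEI : IsEI C) (hF : Function.Injective F.obj)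
    {X Y : D} {p q : Path X Y} {P Q : Path (F.obj X) (F.obj Y)} {g : F.obj Y ≅ F.obj Y}
    (hp : PathUnfact p) (hq : PathUnfact q) (hpP : Refines F p P) (hqQ : Refines F q Q)
    (hPQ : TwistedBy P Q g) : TwistedBy p q (F.preimageIso g) := by
  induction hpP with
  | nil =>
    obtain _ | _ := hPQ
    obtain rfl := Path.eq_nil_of_length_zero q (hqQ.length_eq_zero_iff.2 rfl)
    simpa using TwistedBy.nil
  | @cons _ _ _ P e r _ _ hrlen hre ih =>
    obtain _ | ⟨hp, he⟩ := hp
    obtain ⟨B, s, gW, hQ, hPB, hlen, hs⟩ := hPQ.exists_split P r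
    rw [hre] at hs
    cases q with
    | nil =>
      have := hqQ.length_eq_zero_iff.1 rfl
      simp only [hQ, Path.length_comp] at this
      omega
    | cons q f =>
    obtain _ | ⟨hq, hf⟩ := hq
    obtain _ | @⟨_, _, _, Q, _, t, hqQ, ht, -, htf⟩ := hqQ
    rcases lt_trichotomy t.length s.length with hts | hts | hts
    · obtain ⟨u, rfl, rfl⟩ := Path.exists_eq_comp_of_comp_eq_comp t hQ.symm hts.le
      have hu := (hqQ.pathUnfact.of_comp).2
      have hulen : 0 < u.length := by rw [Path.length_comp] at hts; omega
      rw [composePath_comp, htf] at hs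
      exact (he.comp_map_comp_ne hf (hu.not_isIso_composePath hEI hulen) (k := 𝟙 _)
        (by simpa using hs)).elim
    · obtain ⟨u, rfl, rfl⟩ := Path.exists_eq_comp_of_comp_eq_comp t hQ.symm hts.le
      have hulen : u.length = 0 := by rw [Path.length_comp] at hts; omega
      obtain rfl := hF (Path.eq_of_length_zero u hulen)
      obtain rfl := Path.eq_nil_of_length_zero u hulen
      rw [Path.nil_comp, htf] at hs
      have hf : f = (F.preimageIso gW).inv ≫ e ≫ (F.preimageIso g).hom :=
        F.map_injective (by simp [hs])
      rw [Path.comp_nil] at hqQ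
      exact hf ▸ .cons _ _ e (ih hp hq hqQ hPB)
    · obtain ⟨u, rfl, rfl⟩ := Path.exists_eq_comp_of_comp_eq_comp s hQ hts.le
      have hu := ht.of_comp.1
      have hulen : 0 < u.length := by rw [Path.length_comp] at hts; omega
      rw [composePath_comp, hs] at htf
      exact (hf.comp_map_comp_ne he (c := composePath u ≫ gW.inv) (i := 𝟙 _) (j := 𝟙 _)
        (by simpa using hu.not_isIso_composePath hEI hulen) (by simpa using htf)).elim

end Refinement

theorem SatisfiesUFP.of_fullyFaithful {C D : Type*} [Category C] [Category D] [Finite C]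
    (hEI : IsEI C) (hC : SatisfiesUFP C) (F : D ⥤ C) [F.Full] [F.Faithful]
    (hF : Function.Injective F.obj) : SatisfiesUFP D := by
  intro X Y p q hp hq hpq hcomp
  obtain ⟨P, hpP⟩ := hp.exists_refines (F := F) hEI
  obtain ⟨Q, hqQ⟩ := hq.exists_refines (F := F) hEI
  have hPQ : TwistedBy P Q (Iso.refl _) := by
    refine hC P Q hpP.pathUnfact hqQ.pathUnfact ?_ ?_
    · rw [hpP.composePath_eq, isIso_iff_of_reflects_iso]
      exact hpq
    · rw [hpP.composePath_eq, hqQ.composePath_eq, hcomp]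
  simpa using hPQ.of_refines hEI hF hp hq hpP hqQ

theorem stmt13_general {C : Type*} [Category C] [Finite (Σ x y : C, x ⟶ y)]
    (hEI : ∀ (x : C) (f : x ⟶ x), IsIso f) :
    SatisfiesUFP C ↔ ∀ S : Set C, SatisfiesUFP (ObjectProperty.FullSubcategory fun x => x ∈ S) := by
  have : Finite C := .of_injective (fun x => (⟨x, x, 𝟙 x⟩ : Σ x y : C, x ⟶ y))
    fun _ _ h => congrArg Sigma.fst h
  let P : ObjectProperty C := fun x => x ∈ Set.univ
  have : Finite P.FullSubcategory :=
    .of_injective P.ι.obj fun _ _ => ObjectProperty.FullSubcategory.ext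
  have : (P.lift (𝟭 C) fun _ => trivial).Faithful :=
    .of_comp_iso (P.liftCompιIso (𝟭 C) fun _ => trivial)
  have : (P.lift (𝟭 C) fun _ => trivial).Full :=
    .of_comp_faithful_iso (P.liftCompιIso (𝟭 C) fun _ => trivial)
  exact ⟨fun hC S => hC.of_fullyFaithful hEI (ObjectProperty.ι _)
    fun _ _ => ObjectProperty.FullSubcategory.ext,
    fun h => SatisfiesUFP.of_fullyFaithful (IsEI.of_fullyFaithful hEI P.ι) (h Set.univ)
      (P.lift (𝟭 C) fun _ => trivial) fun _ _ => congrArg ObjectProperty.FullSubcategory.obj⟩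

/-- A skeletal finite EI category satisfies the Unique Factorization Property if and only
if every full subcategory of it satisfies the Unique Factorization Property. -/
theorem stmt13 {C : Type*} [Category C] [Finite (Σ x y : C, x ⟶ y)]
    (hEI : ∀ (x : C) (f : x ⟶ x), IsIso f)
    (hskel : ∀ x y : C, (x ≅ y) → x = y) :
    SatisfiesUFP C ↔ ∀ S : Set C, SatisfiesUFP (ObjectProperty.FullSubcategory fun x => x ∈ S) :=
  stmt13_general hEI
end

section
/- Let C be a skeletal finite EI category with at least two objects, let x ≠ y be objects with Hom(x,y) nonempty, and view Hom(x,y) as an (Aut(y), Aut(x))-biset. Then every morphism in Hom(x,y) that is unfactorizable remains in the same biset orbit as some chosen representative, and distinct biset orbits of Hom(x,y) give rise to distinct arrows from the trivial module k_x to the trivial module k_y in the quiver construction; in particular, if D is the full subcategory on {x, y} and every morphism of Hom(x,y) is unfactorizable in D, then the number of arrows from k_x to k_y in the ordinary quiver of kD is at least the number of (Aut(y), Aut(x))-orbits of Hom(x,y). -/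
/-!
Every non-isomorphism of the two-object category goes from `x` to `y`, so the radical `Λ` is
spanned by the basis elements of `Hom(x, y)`, and `Λ² = 0` because no two of them compose.
The sandwich `e_y β e_x` is the average of `β` over its `(Aut y, Aut x)`-orbit; pushing the
coefficients of these averages forward to the set of orbits turns the average of an orbit into
the indicator of that orbit, so the averages of distinct orbits are linearly independent in
`e_y Λ e_x = e_y (Λ / Λ²) e_x`.
-/

open CategoryTheory
open scoped Classical

/-- Witness that `A` is the category algebra `kC` of the finite category `C`. -/
structure CategoryAlgebraData (k : Type*) [Field k] (C : Type*) [Category C] [Fintype C]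
    (A : Type*) [Ring A] [Algebra k A] where
  basis : Module.Basis (Σ x y : C, x ⟶ y) k A
  basis_mul_basis : ∀ (x₁ y₁ x₂ y₂ : C) (f : x₁ ⟶ y₁) (g : x₂ ⟶ y₂),
    basis ⟨x₁, y₁, f⟩ * basis ⟨x₂, y₂, g⟩ =
      if h : y₂ = x₁ then basis ⟨x₂, y₁, g ≫ eqToHom h ≫ f⟩ else 0
  one_def : (1 : A) = ∑ x : C, basis ⟨x, x, 𝟙 x⟩

namespace CategoryTheory

variable {C : Type*} [Category C]

instance {x : C} [Finite (x ⟶ x)] : Finite (Aut x) :=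
  Finite.of_injective (fun g : Aut x => g.hom) fun _ _ h => Iso.ext h

def HomOrbitRel (x y : C) (β β' : x ⟶ y) : Prop :=
  ∃ (g : x ≅ x) (h : y ≅ y), β' = g.hom ≫ β ≫ h.hom

variable (k : Type*) [Field k]

noncomputable def orbitAverage {x y : C} (f : x ⟶ y) : (x ⟶ y) →₀ k :=
  ((Nat.card (Aut x) : k)⁻¹ * (Nat.card (Aut y) : k)⁻¹) •
    ∑ᶠ (g : Aut x) (h : Aut y), Finsupp.single (g.hom ≫ f ≫ h.hom) 1

variable {k}

theorem mapDomain_orbitAverage {x y : C} [Finite (x ⟶ x)] [Finite (y ⟶ y)]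
    (hx : (Nat.card (Aut x) : k) ≠ 0) (hy : (Nat.card (Aut y) : k) ≠ 0) (f : x ⟶ y) :
    Finsupp.mapDomain (Quot.mk (HomOrbitRel x y)) (orbitAverage k f) =
      Finsupp.single (Quot.mk _ f) 1 := by
  have := Fintype.ofFinite (Aut x)
  have := Fintype.ofFinite (Aut y)
  have horbit : ∀ (g : Aut x) (h : Aut y),
      Quot.mk (HomOrbitRel x y) (g.hom ≫ f ≫ h.hom) = Quot.mk _ f :=
    fun g h => (Quot.sound ⟨g, h, rfl⟩).symm
  simp only [orbitAverage, finsum_eq_sum_of_fintype, Finsupp.mapDomain_smul,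
    Finsupp.mapDomain_finsetSum, Finsupp.mapDomain_single, horbit, Finset.sum_const,
    Finset.card_univ, ← Nat.card_eq_fintype_card, smul_smul]
  rw [← Nat.cast_smul_eq_nsmul k, smul_smul, Nat.cast_mul, ← mul_inv,
    inv_mul_cancel₀ (mul_ne_zero hx hy), one_smul]

end CategoryTheory

namespace CategoryAlgebraData

variable {k : Type*} [Field k] {C : Type*} [Category C] [Fintype C]
  {A : Type*} [Ring A] [Algebra k A] (hA : CategoryAlgebraData k C A)

theorem basis_mul_basis_comp {x y z : C} (f : y ⟶ z) (g : x ⟶ y) :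
    hA.basis ⟨y, z, f⟩ * hA.basis ⟨x, y, g⟩ = hA.basis ⟨x, z, g ≫ f⟩ := by
  simp [hA.basis_mul_basis]

theorem basis_mul_basis_of_ne {x₁ y₁ x₂ y₂ : C} (f : x₁ ⟶ y₁) (g : x₂ ⟶ y₂) (h : y₂ ≠ x₁) :
    hA.basis ⟨x₁, y₁, f⟩ * hA.basis ⟨x₂, y₂, g⟩ = 0 := by
  rw [hA.basis_mul_basis, dif_neg h]

noncomputable def autAverage (x : C) : A :=
  (Nat.card (Aut x) : k)⁻¹ • ∑ᶠ g : Aut x, hA.basis ⟨x, x, g.hom⟩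

theorem autAverage_mul_basis_mul_autAverage {x y : C} [Finite (x ⟶ x)] [Finite (y ⟶ y)]
    (f : x ⟶ y) :
    hA.autAverage y * hA.basis ⟨x, y, f⟩ * hA.autAverage x =
      Finsupp.linearCombination k (fun f' : x ⟶ y => hA.basis ⟨x, y, f'⟩) (orbitAverage k f) := by
  have := Fintype.ofFinite (Aut x)
  have := Fintype.ofFinite (Aut y)
  simp only [autAverage, orbitAverage, finsum_eq_sum_of_fintype, map_smul, map_sum,
    Finsupp.linearCombination_single, one_smul, Finset.mul_sum, Finset.sum_mul, smul_mul_assoc,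
    mul_smul_comm, Finset.smul_sum, hA.basis_mul_basis_comp, smul_smul]

theorem linearIndependent_autAverage_mul_basis_mul_autAverage {x y : C} [Finite (x ⟶ x)]
    [Finite (y ⟶ y)] (hx : (Nat.card (Aut x) : k) ≠ 0) (hy : (Nat.card (Aut y) : k) ≠ 0) :
    LinearIndependent k fun q : Quot (HomOrbitRel x y) =>
      hA.autAverage y * hA.basis ⟨x, y, q.out⟩ * hA.autAverage x := by
  have hbasis : LinearIndependent k fun f : x ⟶ y => hA.basis ⟨x, y, f⟩ :=
    hA.basis.linearIndependent.comp _ fun f f' h => by simpa using h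
  have haverage : LinearIndependent k fun q : Quot (HomOrbitRel x y) => orbitAverage k q.out := by
    refine LinearIndependent.of_comp (Finsupp.lmapDomain k k (Quot.mk (HomOrbitRel x y))) ?_
    simpa only [Function.comp_def, Finsupp.lmapDomain_apply, mapDomain_orbitAverage hx hy,
      Quot.out_eq] using Finsupp.linearIndependent_single_one k (Quot (HomOrbitRel x y))
  simpa only [autAverage_mul_basis_mul_autAverage, Function.comp_def] using
    haverage.map' _ (LinearMap.ker_eq_bot.mpr hbasis)

end CategoryAlgebraData

theorem Submodule.span_mul_span_eq_bot {R A : Type*} [CommSemiring R] [Semiring A] [Algebra R A]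
    {S T : Set A} (h : ∀ a ∈ S, ∀ b ∈ T, a * b = 0) : span R S * span R T = ⊥ := by
  rw [span_mul_span, span_eq_bot]
  rintro _ ⟨a, ha, b, hb, rfl⟩
  exact h a ha b hb

theorem LinearIndependent.natCard_le_finrank_of_mem {K V ι : Type*} [DivisionRing K]
    [AddCommGroup V] [Module K V] [Finite ι] {v : ι → V} (hv : LinearIndependent K v)
    {N : Submodule K V} [Module.Finite K N] (hN : ∀ i, v i ∈ N) :
    Nat.card ι ≤ Module.finrank K N := by
  have := Fintype.ofFinite ι
  rw [Nat.card_eq_fintype_card, ← finrank_span_eq_card hv]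
  exact Submodule.finrank_mono (Submodule.span_le.mpr (Set.range_subset_iff.mpr hN))

theorem setOf_not_isIso_eq_range {C : Type*} [Category C] {x y : C}
    (hEI : ∀ (z : C) (f : z ⟶ z), IsIso f) (hobj : ∀ z : C, z = x ∨ z = y)
    (hempty : IsEmpty (y ⟶ x)) {M : Type*} (b : (Σ z w : C, z ⟶ w) → M) :
    {a : M | ∃ (z w : C) (f : z ⟶ w), ¬ IsIso f ∧ a = b ⟨z, w, f⟩} =
      Set.range fun f : x ⟶ y => b ⟨x, y, f⟩ := by
  ext a
  constructor
  · rintro ⟨z, w, f, hf, rfl⟩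
    rcases hobj z with rfl | rfl <;> rcases hobj w with rfl | rfl
    · exact absurd (hEI _ f) hf
    · exact ⟨f, rfl⟩
    · exact hempty.elim f
    · exact absurd (hEI _ f) hf
  · rintro ⟨f, rfl⟩
    exact ⟨x, y, f, fun _ => hempty.elim (inv f), rfl⟩

/- The number of arrows `k_x → k_y` in the ordinary quiver of `kD` is encoded as
`dim_k e₂ (Λ / Λ²) e₁`, where `Λ`, spanned by the non-isomorphisms, is the radical of `kD` and
`e₁`, `e₂` are the averaging idempotents of the trivial modules of `Aut x`, `Aut y`. -/
/-- Let `D` be a skeletal finite EI category with exactly two objects `x ≠ y`, with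
`Hom(x,y)` nonempty, `Hom(y,x)` empty and every morphism `x ⟶ y` unfactorizable, and with
all automorphism group orders invertible in `k`.  In the ordinary quiver of the category
algebra `kD`, the number of arrows from the trivial module `k_x` to the trivial module
`k_y` — which equals `dim_k e₂·(rad kD / rad² kD)·e₁` for the averaging idempotents
`e₁ ∈ k Aut(x)`, `e₂ ∈ k Aut(y)` corresponding to the trivial modules — is at least the
number of `(Aut(y), Aut(x))`-orbits of `Hom(x,y)`. -/
theorem stmt18 {k : Type*} [Field k] {C : Type*} [Category C] [Fintype C]
    [∀ a b : C, Finite (a ⟶ b)]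
    (hEI : ∀ (z : C) (f : z ⟶ z), IsIso f)
    (hskel : ∀ z w : C, (z ≅ w) → z = w)
    (hord : ∀ z : C, (Nat.card (Aut z) : k) ≠ 0)
    {x y : C} (hxy : x ≠ y)
    (hobj : ∀ z : C, z = x ∨ z = y)
    (hne : Nonempty (x ⟶ y)) (hempty : IsEmpty (y ⟶ x))
    (hunf : ∀ β : x ⟶ y, Unfactorizable β)
    {A : Type*} [Ring A] [Algebra k A] (hA : CategoryAlgebraData k C A)
    (Λ : Submodule k A)
    (hΛ : Λ = Submodule.span k
      {a : A | ∃ (z w : C) (f : z ⟶ w), ¬ IsIso f ∧ a = hA.basis ⟨z, w, f⟩})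
    (e₁ e₂ : A)
    (he₁ : e₁ = (Nat.card (Aut x) : k)⁻¹ • ∑ᶠ g : Aut x, hA.basis ⟨x, x, g.hom⟩)
    (he₂ : e₂ = (Nat.card (Aut y) : k)⁻¹ • ∑ᶠ g : Aut y, hA.basis ⟨y, y, g.hom⟩)
    (T : A →ₗ[k] A)
    (hT : T = (LinearMap.mulLeft k e₂) ∘ₗ (LinearMap.mulRight k e₁)) :
    Nat.card (Quot fun β β' : (x ⟶ y) =>
        ∃ (g : x ≅ x) (h : y ≅ y), β' = g.hom ≫ β ≫ h.hom) ≤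
      Module.finrank k
        (↥(Λ.map T) ⧸
          Submodule.comap (Λ.map T).subtype ((Λ * Λ).map T)) := by
  set b : (x ⟶ y) → A := fun f => hA.basis ⟨x, y, f⟩
  have hΛb : Λ = Submodule.span k (Set.range b) := by
    rw [hΛ, setOf_not_isIso_eq_range hEI hobj hempty]
  have hΛΛ : Λ * Λ = ⊥ := by
    rw [hΛb]
    refine Submodule.span_mul_span_eq_bot ?_
    rintro _ ⟨f, rfl⟩ _ ⟨f', rfl⟩
    exact hA.basis_mul_basis_of_ne f f' hxy.symm
  have hTb : ∀ f, T (b f) = hA.autAverage y * b f * hA.autAverage x := by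
    rw [hT, he₁, he₂]
    exact fun f => (mul_assoc _ _ _).symm
  rw [hΛΛ, Submodule.map_bot, Submodule.comap_bot, Submodule.ker_subtype,
    (Submodule.quotEquivOfEqBot _ rfl).finrank_eq]
  have : Module.Finite k (Λ.map T) := by
    rw [Module.Finite.iff_fg, hΛb]
    exact (Submodule.fg_span (Set.finite_range b)).map T
  have hindep : LinearIndependent k fun q : Quot (HomOrbitRel x y) => T (b q.out) := by
    simpa only [hTb] using
      hA.linearIndependent_autAverage_mul_basis_mul_autAverage (hord x) (hord y)
  exact hindep.natCard_le_finrank_of_mem fun q =>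
    Submodule.mem_map_of_mem (hΛb ▸ Submodule.subset_span ⟨q.out, rfl⟩)
end
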